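/- (Iterates-norm bound.) Suppose the loss is self-bounded (|f'(u)| ≤ f(u)) and the gradient-descent iterates satisfy the descent condition F̂(w_{t+1}) ≤ F̂(w_t) − (η/2)‖∇F̂(w_t)‖² for all t ≥ 0. Fix T ≥ 1 and suppose w ∈ ℝ^{md} and the width m satisfy ‖w − w_0‖² ≥ max{η·T·F̂(w), η·F̂(w_0)} and √m ≥ 18·L·R²·‖w − w_0‖². Then ‖w_t − w‖ ≤ 3‖w − w_0‖ for all t ∈ {1,…,T}. -/

import Mathlib

open scoped BigOperators

/-- Two-layer network `Φ(w,x) = (1/√m) ∑_j a_j σ(⟨w_j, x⟩)`. -/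
noncomputable def Phi {m d : ℕ} (a : Fin m → ℝ) (σ : ℝ → ℝ)
    (w : EuclideanSpace ℝ (Fin m × Fin d)) (x : EuclideanSpace ℝ (Fin d)) : ℝ :=
  (1 / Real.sqrt m) * ∑ j : Fin m, a j * σ (∑ i : Fin d, w (j, i) * x i)

/-- Empirical loss `F̂(w) = (1/n) ∑_i f(y_i Φ(w, x_i))`. -/
noncomputable def empLoss {m d n : ℕ} (a : Fin m → ℝ) (σ f : ℝ → ℝ)
    (x : Fin n → EuclideanSpace ℝ (Fin d)) (y : Fin n → ℝ)
    (w : EuclideanSpace ℝ (Fin m × Fin d)) : ℝ :=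
  (1 / (n : ℝ)) * ∑ i : Fin n, f (y i * Phi a σ w (x i))

open Set
open scoped RealInnerProductSpace

/-!
Along the segment `α ↦ w + α • (p - w)` the empirical loss `g` satisfies `g'' ≥ -c g` with
`c = L R² ‖p - w‖² / √m`: the loss is convex and self-bounded, and the second derivative of the
network along the segment is at most `L R² ‖p - w‖² / √m` in absolute value. Then
`g + c M α² / 2` is convex on `[0, 1]`, `M` being the maximum of `g` there; comparing it with its
chord bounds `M` by the endpoint values, and comparing it with its tangent at `1` gives
`g'(1) ≥ -2 g(0)` once `c ≤ 1/2`, i.e. `⟪∇F̂ p, p - w⟫ ≥ -2 F̂ w` on the ball of radius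
`3 ‖w - w₀‖` around `w` (there `c ≤ 1/2` is the width condition `18 L R² ‖w - w₀‖² ≤ √m`).

Expanding `‖w_{t+1} - w‖²` and using the descent condition, each step then increases
`‖w_t - w‖²` by at most `4 η F̂ w + 2 η (F̂ w_t - F̂ w_{t+1})`. Telescoping gives
`‖w_t - w‖² ≤ ‖w - w₀‖² + 4 t η F̂ w + 2 η F̂ w₀ ≤ 7 ‖w - w₀‖²`, so the iterates never leave the
ball and the correlation bound stays available.
-/

def HasDeriv2 (g g' g'' : ℝ → ℝ) : Prop :=
  (∀ α, HasDerivAt g (g' α) α) ∧ ∀ α, HasDerivAt g' (g'' α) α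

namespace HasDeriv2

variable {g g' g'' : ℝ → ℝ}

theorem const_mul (hg : HasDeriv2 g g' g'') (c : ℝ) :
    HasDeriv2 (fun α => c * g α) (fun α => c * g' α) (fun α => c * g'' α) :=
  ⟨fun α => (hg.1 α).const_mul c, fun α => (hg.2 α).const_mul c⟩

theorem sum {ι : Type*} [Fintype ι] {g g' g'' : ι → ℝ → ℝ}
    (hg : ∀ i, HasDeriv2 (g i) (g' i) (g'' i)) :
    HasDeriv2 (fun α => ∑ i, g i α) (fun α => ∑ i, g' i α) (fun α => ∑ i, g'' i α) :=
  ⟨fun α => HasDerivAt.fun_sum fun i _ => (hg i).1 α,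
    fun α => HasDerivAt.fun_sum fun i _ => (hg i).2 α⟩

theorem comp {f : ℝ → ℝ} (hf : ContDiff ℝ 2 f) (hg : HasDeriv2 g g' g'') :
    HasDeriv2 (fun α => f (g α)) (fun α => deriv f (g α) * g' α)
      (fun α => deriv (deriv f) (g α) * g' α ^ 2 + deriv f (g α) * g'' α) := by
  have hf₁ : Differentiable ℝ f := hf.differentiable two_ne_zero
  have hf₂ : Differentiable ℝ (deriv f) := hf.deriv'.differentiable one_ne_zero
  refine ⟨fun α => (hf₁ _).hasDerivAt.comp α (hg.1 α), fun α => ?_⟩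
  refine (((hf₂ _).hasDerivAt.comp α (hg.1 α)).mul (hg.2 α)).congr_deriv ?_
  rw [Function.comp_apply]
  ring

theorem convexOn_add_sq {D : Set ℝ} (hD : Convex ℝ D) (hg : HasDeriv2 g g' g'') {K : ℝ}
    (hK : ∀ α ∈ interior D, -K ≤ g'' α) : ConvexOn ℝ D (fun α => g α + K / 2 * α ^ 2) := by
  obtain ⟨hg', hg''⟩ := hg
  refine convexOn_of_hasDerivWithinAt2_nonneg (f' := fun α => g' α + K * α)
    (f'' := fun α => g'' α + K) hD ?_ (fun α _ => ?_) (fun α _ => ?_) fun α hα => ?_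
  · exact ((continuous_iff_continuousAt.2 fun α => (hg' α).continuousAt).add
      (by fun_prop)).continuousOn
  · refine (((hg' α).fun_add ((hasDerivAt_pow 2 α).const_mul (K / 2))).congr_deriv
      ?_).hasDerivWithinAt
    ring
  · exact (((hg'' α).fun_add ((hasDerivAt_id' α).const_mul K)).congr_deriv
      (by rw [mul_one])).hasDerivWithinAt
  · linarith [hK α hα]

theorem neg_two_mul_le_deriv_one {c : ℝ} (hg : HasDeriv2 g g' g'') (hc₀ : 0 ≤ c)
    (hc : c ≤ 1 / 2)
    (hg₀ : ∀ α ∈ Icc (0 : ℝ) 1, 0 ≤ g α) (hg'' : ∀ α ∈ Icc (0 : ℝ) 1, -(c * g α) ≤ g'' α) :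
    -(2 * g 0) ≤ g' 1 := by
  have hg' := hg.1
  obtain ⟨α₀, hα₀, hmax⟩ := isCompact_Icc.exists_isMaxOn (nonempty_Icc.2 zero_le_one)
    (fun α _ => (hg' α).continuousAt.continuousWithinAt)
  set M := g α₀
  have hconv := hg.convexOn_add_sq (convex_Icc 0 1) (K := c * M) fun α hα => by
    have hα := interior_subset hα
    nlinarith [hg'' α hα, mul_le_mul_of_nonneg_left (hmax hα) hc₀]
  have h0 : (0 : ℝ) ∈ Icc (0 : ℝ) 1 := left_mem_Icc.2 zero_le_one
  have h1 : (1 : ℝ) ∈ Icc (0 : ℝ) 1 := right_mem_Icc.2 zero_le_one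
  have hM : M ≤ g 0 + g 1 + c * M / 8 := by
    have := hconv.2 h0 h1 (sub_nonneg.2 hα₀.2) hα₀.1 (sub_add_cancel 1 α₀)
    have hcM : 0 ≤ c * M := mul_nonneg hc₀ (hg₀ α₀ hα₀)
    simp only [smul_eq_mul, ne_eq, OfNat.ofNat_ne_zero, not_false_eq_true, zero_pow, mul_zero,
      zero_add, add_zero, one_pow, mul_one] at this
    nlinarith [mul_nonneg hα₀.1 (hg₀ 0 h0), mul_nonneg (sub_nonneg.2 hα₀.2) (hg₀ 1 h1),
      mul_nonneg hcM (sq_nonneg (α₀ - 1 / 2))]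
  have hslope := hconv.slope_le_of_hasDerivAt h0 h1 zero_lt_one
    ((hg' 1).add (((hasDerivAt_id 1).pow 2).const_mul (c * M / 2)))
  simp only [slope_def_field] at hslope
  nlinarith [hg₀ 0 h0, hg₀ 1 h1, hg₀ α₀ hα₀, mul_le_mul_of_nonneg_right hc (hg₀ α₀ hα₀)]

end HasDeriv2

theorem hasDeriv2_affine (s t : ℝ) : HasDeriv2 (fun α => s + α * t) (fun _ => t) (fun _ => 0) :=
  ⟨fun α => by simpa using ((hasDerivAt_id α).mul_const t).const_add s,
    fun _ => hasDerivAt_const _ _⟩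

section Network

variable {m d : ℕ}

def neuronInput (w : EuclideanSpace ℝ (Fin m × Fin d)) (x : EuclideanSpace ℝ (Fin d))
    (j : Fin m) : ℝ :=
  ∑ k, w (j, k) * x k

theorem neuronInput_add_smul (w v : EuclideanSpace ℝ (Fin m × Fin d))
    (x : EuclideanSpace ℝ (Fin d)) (α : ℝ) (j : Fin m) :
    neuronInput (w + α • v) x j = neuronInput w x j + α * neuronInput v x j := by
  simp only [neuronInput, PiLp.add_apply, PiLp.smul_apply, smul_eq_mul, add_mul,
    Finset.sum_add_distrib, Finset.mul_sum, mul_assoc]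

theorem sum_neuronInput_sq_le (v : EuclideanSpace ℝ (Fin m × Fin d))
    (x : EuclideanSpace ℝ (Fin d)) : ∑ j, neuronInput v x j ^ 2 ≤ ‖x‖ ^ 2 * ‖v‖ ^ 2 := by
  rw [EuclideanSpace.real_norm_sq_eq, EuclideanSpace.real_norm_sq_eq v, Fintype.sum_prod_type,
    Finset.mul_sum]
  refine Finset.sum_le_sum fun j _ => ?_
  rw [mul_comm]
  exact Finset.sum_mul_sq_le_sq_mul_sq _ _ _

theorem Phi_eq (a : Fin m → ℝ) (σ : ℝ → ℝ) (w : EuclideanSpace ℝ (Fin m × Fin d))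
    (x : EuclideanSpace ℝ (Fin d)) :
    Phi a σ w x = 1 / √m * ∑ j, a j * σ (neuronInput w x j) :=
  rfl

theorem exists_hasDeriv2_mul_Phi_line {a : Fin m → ℝ} {σ : ℝ → ℝ} {L y₀ : ℝ}
    (ha : ∀ j, |a j| ≤ 1) (hy₀ : |y₀| ≤ 1) (hσ : ContDiff ℝ 2 σ)
    (hσ'' : ∀ u, |deriv (deriv σ) u| ≤ L) (w v : EuclideanSpace ℝ (Fin m × Fin d))
    (x₀ : EuclideanSpace ℝ (Fin d)) :
    ∃ z' z'' : ℝ → ℝ, HasDeriv2 (fun α => y₀ * Phi a σ (w + α • v) x₀) z' z'' ∧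
      ∀ α, |z'' α| ≤ L * ‖x₀‖ ^ 2 * ‖v‖ ^ 2 / √m := by
  set s := neuronInput w x₀
  set t := neuronInput v x₀
  have hline : (fun α => y₀ * Phi a σ (w + α • v) x₀) =
      fun α => y₀ * (1 / √m * ∑ j, a j * σ (s j + α * t j)) := by
    simp only [Phi_eq, neuronInput_add_smul, s, t]
  refine ⟨_, _, hline ▸ ((HasDeriv2.sum fun j =>
    ((hasDeriv2_affine (s j) (t j)).comp hσ).const_mul (a j)).const_mul _).const_mul y₀,
    fun α => ?_⟩
  have hL : 0 ≤ L := (abs_nonneg _).trans (hσ'' 0)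
  have hterm : ∀ j,
      |a j * (deriv (deriv σ) (s j + α * t j) * t j ^ 2 + deriv σ (s j + α * t j) * 0)| ≤
        L * t j ^ 2 := fun j => by
    rw [mul_zero, add_zero, abs_mul, abs_mul, abs_of_nonneg (sq_nonneg (t j)), ← one_mul (L * _)]
    exact mul_le_mul (ha j) (mul_le_mul_of_nonneg_right (hσ'' _) (sq_nonneg _)) (by positivity)
      zero_le_one
  have hsum := (Finset.abs_sum_le_sum_abs _ _).trans <|
    (Finset.sum_le_sum fun j _ => hterm j).trans <| (Finset.mul_sum ..).symm.trans_le <|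
      mul_le_mul_of_nonneg_left (sum_neuronInput_sq_le v x₀) hL
  rw [abs_mul, abs_mul, abs_of_nonneg (by positivity : (0 : ℝ) ≤ 1 / √m)]
  calc |y₀| * (1 / √m * _) ≤ 1 * (1 / √m * (L * (‖x₀‖ ^ 2 * ‖v‖ ^ 2))) := by gcongr
    _ = L * ‖x₀‖ ^ 2 * ‖v‖ ^ 2 / √m := by ring

end Network

theorem HasGradientAt.hasDerivAt_comp_add_smul {E : Type*} [NormedAddCommGroup E]
    [InnerProductSpace ℝ E] [CompleteSpace E] {F : E → ℝ} {g w v : E} {α : ℝ}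
    (hF : HasGradientAt F g (w + α • v)) :
    HasDerivAt (fun β : ℝ => F (w + β • v)) ⟪g, v⟫ α := by
  have := hF.hasFDerivAt.comp_hasDerivAt α (((hasDerivAt_id α).smul_const v).const_add w)
  rwa [InnerProductSpace.toDual_apply_apply, one_smul] at this

section EmpiricalLoss

variable {m d n : ℕ} {a : Fin m → ℝ} {σ f : ℝ → ℝ} {x : Fin n → EuclideanSpace ℝ (Fin d)}
  {y : Fin n → ℝ} {L R : ℝ}

theorem empLoss_nonneg (hf : ∀ u, 0 ≤ f u) (w : EuclideanSpace ℝ (Fin m × Fin d)) :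
    0 ≤ empLoss a σ f x y w :=
  mul_nonneg (by positivity) (Finset.sum_nonneg fun i _ => hf _)

theorem exists_hasDeriv2_empLoss_line (ha : ∀ j, |a j| ≤ 1) (hy : ∀ i, |y i| ≤ 1)
    (hx : ∀ i, ‖x i‖ ≤ R) (hσ : ContDiff ℝ 2 σ) (hσ'' : ∀ u, |deriv (deriv σ) u| ≤ L)
    (hf : ContDiff ℝ 2 f) (hfconv : ConvexOn ℝ univ f) (hfself : ∀ u, |deriv f u| ≤ f u)
    (w v : EuclideanSpace ℝ (Fin m × Fin d)) :
    ∃ g' g'' : ℝ → ℝ, HasDeriv2 (fun α => empLoss a σ f x y (w + α • v)) g' g'' ∧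
      ∀ α, -(L * R ^ 2 * ‖v‖ ^ 2 / √m * empLoss a σ f x y (w + α • v)) ≤ g'' α := by
  choose z' z'' hz hz'' using fun i => exists_hasDeriv2_mul_Phi_line ha (hy i) hσ hσ'' w v (x i)
  refine ⟨_, _, (HasDeriv2.sum fun i => (hz i).comp hf).const_mul (1 / n), fun α => ?_⟩
  have hL : 0 ≤ L := (abs_nonneg _).trans (hσ'' 0)
  have hf₂ : ∀ u, 0 ≤ deriv (deriv f) u := fun u =>
    (monotoneOn_univ.1 (hfconv.monotoneOn_deriv fun u _ =>
      (hf.differentiable two_ne_zero) u)).deriv_nonneg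
  have hterm : ∀ i, -(L * R ^ 2 * ‖v‖ ^ 2 / √m * f (y i * Phi a σ (w + α • v) (x i))) ≤
      deriv (deriv f) (y i * Phi a σ (w + α • v) (x i)) * z' i α ^ 2 +
        deriv f (y i * Phi a σ (w + α • v) (x i)) * z'' i α := fun i => by
    set u := y i * Phi a σ (w + α • v) (x i)
    have hz''R : |z'' i α| ≤ L * R ^ 2 * ‖v‖ ^ 2 / √m :=
      (hz'' i α).trans (by gcongr; exact hx i)
    have hprod : |deriv f u * z'' i α| ≤ f u * (L * R ^ 2 * ‖v‖ ^ 2 / √m) := by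
      rw [abs_mul]
      exact mul_le_mul (hfself u) hz''R (abs_nonneg _) ((abs_nonneg _).trans (hfself u))
    nlinarith [neg_abs_le (deriv f u * z'' i α), mul_nonneg (hf₂ u) (sq_nonneg (z' i α))]
  calc -(L * R ^ 2 * ‖v‖ ^ 2 / √m * empLoss a σ f x y (w + α • v))
      = 1 / n * ∑ i, -(L * R ^ 2 * ‖v‖ ^ 2 / √m * f (y i * Phi a σ (w + α • v) (x i))) := by
        rw [empLoss, Finset.sum_neg_distrib, ← Finset.mul_sum]; ring
    _ ≤ _ := by gcongr with i; exact hterm i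

theorem neg_two_mul_empLoss_le_inner_gradient (ha : ∀ j, |a j| ≤ 1) (hy : ∀ i, |y i| ≤ 1)
    (hx : ∀ i, ‖x i‖ ≤ R) (hσ : ContDiff ℝ 2 σ) (hσ'' : ∀ u, |deriv (deriv σ) u| ≤ L)
    (hf : ContDiff ℝ 2 f) (hfconv : ConvexOn ℝ univ f) (hfnonneg : ∀ u, 0 ≤ f u)
    (hfself : ∀ u, |deriv f u| ≤ f u) {p w : EuclideanSpace ℝ (Fin m × Fin d)}
    (hpw : 2 * (L * R ^ 2 * ‖p - w‖ ^ 2) ≤ √m) :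
    -(2 * empLoss a σ f x y w) ≤ ⟪gradient (empLoss a σ f x y) p, p - w⟫ := by
  obtain ⟨g', g'', hg, hg''⟩ :=
    exists_hasDeriv2_empLoss_line ha hy hx hσ hσ'' hf hfconv hfself w (p - w)
  have hL : 0 ≤ L := (abs_nonneg _).trans (hσ'' 0)
  have hc : L * R ^ 2 * ‖p - w‖ ^ 2 / √m ≤ 1 / 2 :=
    div_le_of_le_mul₀ (Real.sqrt_nonneg _) (by norm_num) (by linarith)
  have key := HasDeriv2.neg_two_mul_le_deriv_one hg (by positivity) hc
    (fun α _ => empLoss_nonneg hfnonneg _) fun α _ => hg'' α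
  have hdiff : Differentiable ℝ (empLoss a σ f x y) := by
    have := hσ.differentiable two_ne_zero
    have := hf.differentiable two_ne_zero
    unfold empLoss Phi
    fun_prop
  have hg'1 : g' 1 = ⟪gradient (empLoss a σ f x y) p, p - w⟫ := by
    refine (hg.1 1).unique (HasGradientAt.hasDerivAt_comp_add_smul ?_)
    rw [one_smul, add_sub_cancel]
    exact (hdiff p).hasGradientAt
  simpa [hg'1] using key

end EmpiricalLoss

section GradientDescent

variable {E : Type*} [NormedAddCommGroup E] [InnerProductSpace ℝ E] {F : E → ℝ} {η : ℝ}

theorem norm_sub_smul_sub_sq_le (hη : 0 ≤ η) {p g w : E}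
    (hdesc : F (p - η • g) ≤ F p - η / 2 * ‖g‖ ^ 2) (hcorr : -(2 * F w) ≤ ⟪g, p - w⟫) :
    ‖p - η • g - w‖ ^ 2 ≤ ‖p - w‖ ^ 2 + 4 * η * F w + 2 * η * (F p - F (p - η • g)) := by
  rw [sub_right_comm, norm_sub_sq_real, real_inner_smul_right, real_inner_comm, norm_smul,
    mul_pow, Real.norm_of_nonneg hη]
  nlinarith [mul_le_mul_of_nonneg_left hdesc hη, mul_le_mul_of_nonneg_left hcorr hη]

theorem norm_iterate_sub_le (hη : 0 ≤ η) (hF : ∀ u, 0 ≤ F u) {G : E → E} {W : ℕ → E}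
    (hrec : ∀ t, W (t + 1) = W t - η • G (W t))
    (hdesc : ∀ t, F (W (t + 1)) ≤ F (W t) - η / 2 * ‖G (W t)‖ ^ 2) {w : E} {T : ℕ}
    (hw : η * T * F w ≤ ‖w - W 0‖ ^ 2) (hw₀ : η * F (W 0) ≤ ‖w - W 0‖ ^ 2)
    (hcorr : ∀ p, ‖p - w‖ ≤ 3 * ‖w - W 0‖ → -(2 * F w) ≤ ⟪G p, p - w⟫) {t : ℕ} (ht : t ≤ T) :
    ‖W t - w‖ ≤ 3 * ‖w - W 0‖ := by
  set ρ := ‖w - W 0‖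
  have hball : ∀ s ≤ T,
      ‖W s - w‖ ^ 2 ≤ ρ ^ 2 + 4 * s * η * F w + 2 * η * (F (W 0) - F (W s)) →
      ‖W s - w‖ ≤ 3 * ρ := fun s hs h => by
    have := mul_le_mul_of_nonneg_right (Nat.cast_le.2 hs : (s : ℝ) ≤ T) (mul_nonneg hη (hF w))
    refine (pow_le_pow_iff_left₀ (norm_nonneg _) (by positivity) two_ne_zero).1 ?_
    nlinarith [mul_nonneg hη (hF (W s))]
  have hinv : ∀ s ≤ T,
      ‖W s - w‖ ^ 2 ≤ ρ ^ 2 + 4 * s * η * F w + 2 * η * (F (W 0) - F (W s)) := by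
    intro s
    induction s with
    | zero => intro; simp [ρ, norm_sub_rev]
    | succ s ih =>
      intro hs
      have hs' := (Nat.le_succ s).trans hs
      have := norm_sub_smul_sub_sq_le hη (hrec s ▸ hdesc s) (hcorr _ (hball s hs' (ih hs')))
      rw [hrec s]
      push_cast
      linarith [ih hs']
  exact hball t ht (hinv t ht)

end GradientDescent

theorem iterates_norm_bound_general
    {m d n : ℕ} (L R η : ℝ)
    (a : Fin m → ℝ) (ha : ∀ j, a j = 1 ∨ a j = -1)
    (σ : ℝ → ℝ) (hσ : ContDiff ℝ 2 σ)
    (hσ'' : ∀ u, |deriv (deriv σ) u| ≤ L)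
    (f : ℝ → ℝ) (hf : ContDiff ℝ 2 f) (hfconv : ConvexOn ℝ Set.univ f)
    (hfnonneg : ∀ u, 0 ≤ f u) (hfself : ∀ u, |deriv f u| ≤ f u)
    (x : Fin n → EuclideanSpace ℝ (Fin d)) (y : Fin n → ℝ)
    (hx : ∀ i, ‖x i‖ ≤ R) (hy : ∀ i, y i = 1 ∨ y i = -1)
    (hη : 0 < η)
    (w₀ : EuclideanSpace ℝ (Fin m × Fin d))
    (W : ℕ → EuclideanSpace ℝ (Fin m × Fin d)) (hW0 : W 0 = w₀)
    (hWrec : ∀ t : ℕ, W (t + 1) = W t - η • gradient (empLoss a σ f x y) (W t))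
    (hdescent : ∀ t : ℕ,
      empLoss a σ f x y (W (t + 1))
        ≤ empLoss a σ f x y (W t) - (η / 2) * ‖gradient (empLoss a σ f x y) (W t)‖ ^ 2)
    (w : EuclideanSpace ℝ (Fin m × Fin d)) (T : ℕ)
    (hw : max (η * T * empLoss a σ f x y w) (η * empLoss a σ f x y w₀) ≤ ‖w - w₀‖ ^ 2)
    (hm : 18 * L * R ^ 2 * ‖w - w₀‖ ^ 2 ≤ Real.sqrt m) :
    ∀ t ∈ Finset.Icc 1 T, ‖W t - w‖ ≤ 3 * ‖w - w₀‖ := by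
  subst hW0
  have ha' : ∀ j, |a j| ≤ 1 := fun j => by rcases ha j with h | h <;> simp [h]
  have hy' : ∀ i, |y i| ≤ 1 := fun i => by rcases hy i with h | h <;> simp [h]
  have hL : 0 ≤ L := (abs_nonneg _).trans (hσ'' 0)
  intro t ht
  refine norm_iterate_sub_le hη.le (empLoss_nonneg hfnonneg) hWrec hdescent
    ((le_max_left _ _).trans hw) ((le_max_right _ _).trans hw) (fun p hp => ?_)
    (Finset.mem_Icc.1 ht).2
  refine neg_two_mul_empLoss_le_inner_gradient ha' hy' hx hσ hσ'' hf hfconv hfnonneg hfself ?_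
  calc 2 * (L * R ^ 2 * ‖p - w‖ ^ 2) ≤ 2 * (L * R ^ 2 * (3 * ‖w - W 0‖) ^ 2) := by gcongr
    _ = 18 * L * R ^ 2 * ‖w - W 0‖ ^ 2 := by ring
    _ ≤ √m := hm

/-- iterates-norm bound for GD under the descent condition. -/
theorem iterates_norm_bound
    {m d n : ℕ} (ℓ L R η : ℝ)
    (a : Fin m → ℝ) (ha : ∀ j, a j = 1 ∨ a j = -1)
    (σ : ℝ → ℝ) (hσ : ContDiff ℝ 2 σ)
    (hσ' : ∀ u, |deriv σ u| ≤ ℓ) (hσ'' : ∀ u, |deriv (deriv σ) u| ≤ L)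
    (f : ℝ → ℝ) (hf : ContDiff ℝ 2 f) (hfconv : ConvexOn ℝ Set.univ f)
    (hfnonneg : ∀ u, 0 ≤ f u) (hfself : ∀ u, |deriv f u| ≤ f u)
    (x : Fin n → EuclideanSpace ℝ (Fin d)) (y : Fin n → ℝ)
    (hx : ∀ i, ‖x i‖ ≤ R) (hy : ∀ i, y i = 1 ∨ y i = -1)
    (hη : 0 < η)
    (w₀ : EuclideanSpace ℝ (Fin m × Fin d))
    (W : ℕ → EuclideanSpace ℝ (Fin m × Fin d)) (hW0 : W 0 = w₀)
    (hWrec : ∀ t : ℕ, W (t + 1) = W t - η • gradient (empLoss a σ f x y) (W t))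
    (hdescent : ∀ t : ℕ,
      empLoss a σ f x y (W (t + 1))
        ≤ empLoss a σ f x y (W t) - (η / 2) * ‖gradient (empLoss a σ f x y) (W t)‖ ^ 2)
    (w : EuclideanSpace ℝ (Fin m × Fin d)) (T : ℕ) (hT : 1 ≤ T)
    (hw : max (η * T * empLoss a σ f x y w) (η * empLoss a σ f x y w₀) ≤ ‖w - w₀‖ ^ 2)
    (hm : 18 * L * R ^ 2 * ‖w - w₀‖ ^ 2 ≤ Real.sqrt m) :
    ∀ t ∈ Finset.Icc 1 T, ‖W t - w‖ ≤ 3 * ‖w - w₀‖ :=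
  iterates_norm_bound_general L R η a ha σ hσ hσ'' f hf hfconv hfnonneg hfself x y hx hy hη w₀ W hW0
    hWrec hdescent w T hw hm
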